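/- Let G be a totally disconnected locally compact group, α a continuous endomorphism of G, and U a compact open subgroup of G that is tidy above for α. Then U₋₋ is a closed subset of G if and only if U₋₋ ∩ U = U₋. -/

import Mathlib

open Pointwise Subgroup Filter

variable {G : Type*}

/-- The `n`-fold iterate of an endomorphism `α : G →* G`, as a monoid homomorphism. -/
def iterHom [Group G] (α : G →* G) : ℕ → G →* G
  | 0 => MonoidHom.id G
  | n + 1 => α.comp (iterHom α n)

/-- The descending sequence `U_0 = U`, `U_{n+1} = U ⊓ α(U_n)`. -/
def seqU [Group G] (α : G →* G) (U : Subgroup G) : ℕ → Subgroup G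
  | 0 => U
  | n + 1 => U ⊓ Subgroup.map α (seqU α U n)

/-- `U₊ = ⋂ₙ Uₙ`. -/
def Uplus [Group G] (α : G →* G) (U : Subgroup G) : Subgroup G := ⨅ n, seqU α U n

/-- `U₋ = ⋂ₙ α^{-n}(U)`. -/
def Uminus [Group G] (α : G →* G) (U : Subgroup G) : Subgroup G :=
  ⨅ n, Subgroup.comap (iterHom α n) U

/-- `U₊₊ = ⋃ₙ αⁿ(U₊)` as a subset of `G`. -/
def Upp [Group G] (α : G →* G) (U : Subgroup G) : Set G :=
  ⋃ n, iterHom α n '' (Uplus α U : Set G)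

/-- `U₋₋ = ⋃ₙ α^{-n}(U₋)` as a subset of `G`. -/
def Umm [Group G] (α : G →* G) (U : Subgroup G) : Set G :=
  ⋃ n, iterHom α n ⁻¹' (Uminus α U : Set G)

/-- `U₋ₙ = ⋂_{k=0}^{n} α^{-k}(U)`. -/
def Uneg [Group G] (α : G →* G) (U : Subgroup G) (n : ℕ) : Subgroup G :=
  ⨅ k ∈ Finset.range (n + 1), Subgroup.comap (iterHom α k) U

/-- `U` is tidy above for `α` if `U = U₊U₋`. -/
def TidyAbove [Group G] (α : G →* G) (U : Subgroup G) : Prop :=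
  (U : Set G) = (Uplus α U : Set G) * (Uminus α U : Set G)

/-- `U` is tidy below for `α` if `U₋₋` is closed. -/
def TidyBelow [Group G] [TopologicalSpace G] (α : G →* G) (U : Subgroup G) : Prop :=
  IsClosed (Umm α U)

/-- `U` is tidy for `α` if it is tidy above and tidy below for `α`. -/
def Tidy [Group G] [TopologicalSpace G] (α : G →* G) (U : Subgroup G) : Prop :=
  TidyAbove α U ∧ TidyBelow α U

/-- The scale of `α`: the minimum of `[α(V) : α(V) ∩ V]` over compact open subgroups `V`. -/
noncomputable def scale [Group G] [TopologicalSpace G] (α : G →* G) : ℕ :=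
  sInf {n : ℕ | ∃ V : Subgroup G, IsCompact (V : Set G) ∧ IsOpen (V : Set G) ∧
    n = Subgroup.relIndex V (Subgroup.map α V)}

section ops
variable [Group G] (α : G →* G) (U : Subgroup G)

lemma iterHom_succ_apply (n : ℕ) (x : G) : iterHom α (n+1) x = α (iterHom α n x) := rfl

lemma iterHom_add_apply (m n : ℕ) (x : G) :
    iterHom α (m + n) x = iterHom α m (iterHom α n x) := by
  induction m with
  | zero => rw [Nat.zero_add]; rfl
  | succ m ih => rw [Nat.succ_add, iterHom_succ_apply, iterHom_succ_apply, ih]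

lemma continuous_iterHom [TopologicalSpace G] (hα : Continuous α) (n : ℕ) :
    Continuous (iterHom α n) := by
  induction n with
  | zero => exact continuous_id
  | succ n ih => exact hα.comp ih

variable {α U}

lemma mem_Uminus {x : G} : x ∈ Uminus α U ↔ ∀ n, iterHom α n x ∈ U := by
  simp [Uminus, Subgroup.mem_iInf, Subgroup.mem_comap]

lemma iterHom_mem_Uminus {x : G} (h : x ∈ Uminus α U) (m : ℕ) :
    iterHom α m x ∈ Uminus α U := by
  rw [mem_Uminus] at h ⊢
  intro n
  rw [← iterHom_add_apply]
  exact h _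

lemma Uminus_le : (Uminus α U) ≤ U := fun x hx => mem_Uminus.mp hx 0

lemma mem_Umm {x : G} : x ∈ Umm α U ↔ ∃ n, iterHom α n x ∈ Uminus α U := by
  simp [Umm]

lemma mem_Umm_mono {x : G} {m n : ℕ} (h : m ≤ n) (hx : iterHom α m x ∈ Uminus α U) :
    iterHom α n x ∈ Uminus α U := by
  obtain ⟨k, rfl⟩ := Nat.exists_eq_add_of_le h
  rw [Nat.add_comm, iterHom_add_apply]
  exact iterHom_mem_Uminus hx k

lemma Umm_mul {x y : G} (hx : x ∈ Umm α U) (hy : y ∈ Umm α U) : x * y ∈ Umm α U := by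
  rw [mem_Umm] at hx hy ⊢
  obtain ⟨m, hm⟩ := hx
  obtain ⟨n, hn⟩ := hy
  refine ⟨max m n, ?_⟩
  rw [map_mul]
  exact mul_mem (mem_Umm_mono (le_max_left m n) hm) (mem_Umm_mono (le_max_right m n) hn)

lemma Umm_inv {x : G} (hx : x ∈ Umm α U) : x⁻¹ ∈ Umm α U := by
  rw [mem_Umm] at hx ⊢
  obtain ⟨m, hm⟩ := hx
  exact ⟨m, by rw [map_inv]; exact inv_mem hm⟩

lemma Uminus_subset_Umm : (Uminus α U : Set G) ⊆ Umm α U := fun _ hx =>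
  mem_Umm.mpr ⟨0, hx⟩

lemma seqU_subset_image (n : ℕ) : (seqU α U n : Set G) ⊆ iterHom α n '' (U : Set G) := by
  induction n with
  | zero => intro x hx; exact ⟨x, hx, rfl⟩
  | succ n ih =>
    intro x hx
    obtain ⟨-, w, hw, rfl⟩ := hx
    obtain ⟨z, hz, rfl⟩ := ih hw
    exact ⟨z, hz, rfl⟩

end ops

/-- For `U` tidy above: `U₋₋` is closed iff `U₋₋ ∩ U = U₋`. -/
theorem tidyBelow_iff [Group G] [TopologicalSpace G] [IsTopologicalGroup G]
    [TotallyDisconnectedSpace G] [LocallyCompactSpace G]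
    (α : G →* G) (hα : Continuous α)
    (U : Subgroup G) (hUc : IsCompact (U : Set G)) (hUo : IsOpen (U : Set G))
    (hU : TidyAbove α U) :
    IsClosed (Umm α U) ↔ Umm α U ∩ (U : Set G) = (Uminus α U : Set G) := by
  have hT2 : T2Space G := inferInstance
  have hUcl : IsClosed (U : Set G) := hUc.isClosed
  have hUmin_closed : IsClosed (Uminus α U : Set G) := by
    have : (Uminus α U : Set G) = ⋂ n, iterHom α n ⁻¹' (U : Set G) := by
      ext x
      simp only [Set.mem_iInter, SetLike.mem_coe, mem_Uminus, Set.mem_preimage]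
    rw [this]
    exact isClosed_iInter fun n => hUcl.preimage (continuous_iterHom α hα n)
  constructor
  · -- hard direction
    intro hclosed
    apply Set.Subset.antisymm
    · -- main inclusion
      set L : Set G := Umm α U ∩ (U : Set G) with hLdef
      have hLmul : ∀ {x y : G}, x ∈ L → y ∈ L → x * y ∈ L := fun hx hy =>
        ⟨Umm_mul hx.1 hy.1, mul_mem hx.2 hy.2⟩
      have hLinv : ∀ {x : G}, x ∈ L → x⁻¹ ∈ L := fun hx =>
        ⟨Umm_inv hx.1, inv_mem hx.2⟩
      have hLc : IsCompact L := hUc.inter_left hclosed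
      have hone : (1 : G) ∈ L := ⟨Uminus_subset_Umm (one_mem _), one_mem U⟩
      set C : ℕ → Set G := fun n => (iterHom α n ⁻¹' (Uminus α U : Set G)) ∩ U with hCdef
      have hCmul : ∀ {n : ℕ} {x y : G}, x ∈ C n → y ∈ C n → x * y ∈ C n := by
        intro n x y hx hy
        refine ⟨?_, mul_mem hx.2 hy.2⟩
        show iterHom α n (x * y) ∈ Uminus α U
        rw [map_mul]
        exact mul_mem hx.1 hy.1
      have hCmono : ∀ {m n : ℕ}, m ≤ n → C m ⊆ C n := by
        intro m n hmn x hx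
        exact ⟨mem_Umm_mono hmn hx.1, hx.2⟩
      have hCsubL : ∀ n, C n ⊆ L := fun n x hx => ⟨mem_Umm.mpr ⟨n, hx.1⟩, hx.2⟩
      have hCclosed : ∀ n, IsClosed (C n) := fun n =>
        (hUmin_closed.preimage (continuous_iterHom α hα n)).inter hUcl
      haveI : CompactSpace L := isCompact_iff_compactSpace.mp hLc
      haveI : Nonempty L := ⟨⟨1, hone⟩⟩
      -- Baire category
      obtain ⟨N, hN⟩ : ∃ N, (interior ((Subtype.val : L → G) ⁻¹' C N)).Nonempty := by
        apply nonempty_interior_of_iUnion_of_closed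
        · exact fun n => (hCclosed n).preimage continuous_subtype_val
        · ext x
          simp only [Set.mem_iUnion, Set.mem_preimage, Set.mem_univ, iff_true]
          obtain ⟨n, hn⟩ := mem_Umm.mp x.2.1
          exact ⟨n, hn, x.2.2⟩
      obtain ⟨x₀L, hx₀⟩ := hN
      obtain ⟨V, hVopen, hVeq⟩ := isOpen_induced_iff.mp
        (isOpen_interior (s := ((Subtype.val : L → G) ⁻¹' C N)))
      set x₀ : G := (x₀L : G) with hx₀def
      have hx₀V : x₀ ∈ V := by
        have := hVeq ▸ hx₀; exact this
      have hx₀C : x₀ ∈ C N := by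
        have h' := interior_subset hx₀
        exact h'
      have hVL : ∀ g ∈ L, g ∈ V → g ∈ C N := by
        intro g hgL hgV
        have : (⟨g, hgL⟩ : L) ∈ (Subtype.val : L → G) ⁻¹' V := hgV
        rw [hVeq] at this
        have h' := interior_subset this
        exact h'
      have hx₀L : x₀ ∈ L := hCsubL N hx₀C
      -- cover L by translates of V
      set W : L → Set G := fun i => ((i : G) * x₀⁻¹) • V with hWdef
      have hWopen : ∀ i, IsOpen (W i) := fun i => hVopen.smul _
      have hLsub : L ⊆ ⋃ i, W i := by
        intro g hg
        refine Set.mem_iUnion.mpr ⟨⟨g, hg⟩, ⟨x₀, hx₀V, ?_⟩⟩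
        show g * x₀⁻¹ * x₀ = g
        group
      obtain ⟨t, ht⟩ := hLc.elim_finite_subcover W hWopen hLsub
      -- choose levels for the coset representatives
      have hrep : ∀ i : L, ∃ n, (i : G) * x₀⁻¹ ∈ C n := by
        intro i
        have hmem : (i : G) * x₀⁻¹ ∈ L := hLmul i.2 (hLinv hx₀L)
        obtain ⟨n, hn⟩ := mem_Umm.mp hmem.1
        exact ⟨n, hn, hmem.2⟩
      choose nfun hnfun using hrep
      set M : ℕ := max N (t.sup nfun) with hMdef
      have hLC : L ⊆ C M := by
        intro g hg
        obtain ⟨i, hit, hgW⟩ := Set.mem_iUnion₂.mp (ht hg)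
        obtain ⟨v, hvV, hveq⟩ := hgW
        have hveq' : ((i : G) * x₀⁻¹) * v = g := hveq
        have hvL : v ∈ L := by
          have : v = ((i : G) * x₀⁻¹)⁻¹ * g := by rw [← hveq']; group
          rw [this]
          exact hLmul (hLinv (hLmul i.2 (hLinv hx₀L))) hg
        have hvC : v ∈ C N := hVL v hvL hvV
        have hiC : (i : G) * x₀⁻¹ ∈ C (nfun i) := hnfun i
        rw [← hveq']
        exact hCmul (hCmono (le_trans (Finset.le_sup hit) (le_max_right _ _)) hiC)
          (hCmono (le_max_left _ _) hvC)
      -- use tidy above to conclude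
      intro x hx
      have hxU : x ∈ (Uplus α U : Set G) * (Uminus α U : Set G) := by
        rw [← hU]; exact hx.2
      obtain ⟨a, ha, b, hb, hab⟩ := Set.mem_mul.mp hxU
      have hbm : b ∈ Uminus α U := hb
      have hbL : b ∈ L := ⟨Uminus_subset_Umm hb, Uminus_le hbm⟩
      have haL : a ∈ L := by
        have : a = x * b⁻¹ := by rw [← hab]; group
        rw [this]
        exact hLmul hx (hLinv hbL)
      have haseq : a ∈ seqU α U M := Subgroup.mem_iInf.mp ha M
      obtain ⟨z, hzU, hza⟩ := seqU_subset_image M haseq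
      have hzmm : z ∈ Umm α U := by
        obtain ⟨k, hk⟩ := mem_Umm.mp haL.1
        refine mem_Umm.mpr ⟨k + M, ?_⟩
        rw [iterHom_add_apply, hza]
        exact hk
      have hzC : z ∈ C M := hLC ⟨hzmm, hzU⟩
      have haU : a ∈ Uminus α U := by rw [← hza]; exact hzC.1
      show x ∈ Uminus α U
      rw [← hab]
      exact mul_mem haU hbm
    · exact Set.subset_inter Uminus_subset_Umm fun x hx => Uminus_le hx
  · -- easy direction
    intro heq
    apply isClosed_of_closure_subset
    intro g hg
    obtain ⟨h, hh⟩ : ∃ h, h ∈ (g • (U : Set G)) ∩ Umm α U := by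
      rw [mem_closure_iff] at hg
      exact hg (g • (U : Set G)) (hUo.smul g) ⟨1, one_mem U, mul_one g⟩
    obtain ⟨⟨u, huU, hgu⟩, hhmm⟩ := hh
    have hgh : g ∈ h • (U : Set G) := ⟨u⁻¹, inv_mem huU, by rw [← hgu]; show g * u * u⁻¹ = g; group⟩
    have hsub : Umm α U ∩ h • (U : Set G) ⊆ h • (Umm α U ∩ (U : Set G)) := by
      rintro y ⟨hymm, w, hwU, hwy⟩
      refine ⟨w, ⟨?_, hwU⟩, hwy⟩
      have : w = h⁻¹ * y := by rw [← hwy]; show w = h⁻¹ * (h * w); group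
      rw [this]
      exact Umm_mul (Umm_inv hhmm) hymm
    have hgcl : g ∈ _root_.closure (Umm α U ∩ h • (U : Set G)) := by
      rw [mem_closure_iff]
      intro o ho hgo
      rw [mem_closure_iff] at hg
      obtain ⟨y, ⟨hyo, hyhU⟩, hymm⟩ :=
        hg (o ∩ h • (U : Set G)) (ho.inter (hUo.smul h)) ⟨hgo, hgh⟩
      exact ⟨y, hyo, hymm, hyhU⟩
    have : g ∈ h • (Uminus α U : Set G) := by
      have hcl : _root_.closure (h • (Uminus α U : Set G)) = h • (Uminus α U : Set G) :=
        (hUmin_closed.smul h).closure_eq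
      have := (_root_.closure_mono (hsub.trans (by rw [heq]))) hgcl
      rwa [hcl] at this
    obtain ⟨w, hw, hwg⟩ := this
    have : g = h * w := hwg.symm
    rw [this]
    exact Umm_mul hhmm (Uminus_subset_Umm hw)
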